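/- arXiv:2410.15180 — 2 statements merged into one kernel-verified Lean document; each statement's English description precedes it below -/
import Mathlib

section
/- For any d-variate cumulative distribution function F with continuous univariate margins F_1,...,F_d, there exists a unique copula C: [0,1]^d → [0,1] such that F(x_1,...,x_d) = C(F_1(x_1),...,F_d(x_d)) for all (x_1,...,x_d) ∈ ℝ^d. -/
/-!
Let `T x = (F₁ x₁, …, F_d x_d)` and let `C` be the CDF of `μ ∘ T⁻¹`. The `i`-th margin of
`μ ∘ T⁻¹` is the law of `Fᵢ (Xᵢ)`, uniform by the probability integral transform, so `C` is a
copula; and `{t | Fᵢ t ≤ Fᵢ xᵢ}` differs from `Iic xᵢ` by a set that is null for the `i`-th margin,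
so `F = C ∘ T`. Conversely, a copula `C'` with `F = C' ∘ T` agrees with `C` on
`range T ⊇ (0, 1)^d`. Copulas are Lipschitz, so the two agree on `[0, 1]^d`, and a copula takes the
same value at `u` as at the projection of `u` onto `[0, 1]^d`.
-/

open MeasureTheory

/-- A `d`-dimensional copula, identified with its multivariate CDF on `ℝ^d`:
the CDF of a probability measure concentrated on `[0,1]^d` whose univariate
margins are uniform on `[0,1]`. -/
def IsCopula (d : ℕ) (C : (Fin d → ℝ) → ℝ) : Prop :=
  ∃ ν : Measure (Fin d → ℝ), IsProbabilityMeasure ν ∧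
    (∀ i : Fin d, ν.map (fun y => y i) = volume.restrict (Set.Icc (0 : ℝ) 1)) ∧
    ∀ u : Fin d → ℝ, C u = (ν {y | ∀ i, y i ≤ u i}).toReal

open ProbabilityTheory Set Filter

namespace ProbabilityTheory

variable {m : Measure ℝ}

theorem Ioo_subset_range_cdf (hc : Continuous (cdf m)) : Ioo 0 1 ⊆ range (cdf m) := fun _ ht =>
  mem_range_of_exists_le_of_exists_ge hc
    ((tendsto_cdf_atBot m).eventually (eventually_le_nhds ht.1)).exists
    ((tendsto_cdf_atTop m).eventually (eventually_ge_nhds ht.2)).exists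

variable [IsProbabilityMeasure m]

theorem measure_cdf_preimage_Iic_le (hc : Continuous (cdf m)) (c : ℝ) :
    m (cdf m ⁻¹' Iic c) ≤ ENNReal.ofReal c := by
  set S := cdf m ⁻¹' Iic c
  rcases S.eq_empty_or_nonempty with hS | hS
  · simp [hS]
  by_cases hbdd : BddAbove S
  · have hsup : sSup S ∈ S := (isClosed_Iic.preimage hc).csSup_mem hS hbdd
    calc m S ≤ m (Iic (sSup S)) := measure_mono fun x hx => le_csSup hbdd hx
      _ = ENNReal.ofReal (cdf m (sSup S)) := (ofReal_cdf m _).symm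
      _ ≤ ENNReal.ofReal c := ENNReal.ofReal_le_ofReal hsup
  · have hle : ∀ x, cdf m x ≤ c := fun x => by
      obtain ⟨y, hy, hxy⟩ := not_bddAbove_iff.1 hbdd x
      exact (monotone_cdf m hxy.le).trans hy
    calc m S ≤ 1 := prob_le_one
      _ ≤ ENNReal.ofReal c := ENNReal.one_le_ofReal.2 (le_of_tendsto' (tendsto_cdf_atTop m) hle)

theorem cdf_preimage_Iic_cdf_ae_eq (hc : Continuous (cdf m)) (x : ℝ) :
    cdf m ⁻¹' Iic (cdf m x) =ᵐ[m] Iic x :=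
  (ae_eq_of_subset_of_measure_ge (fun _ hy => monotone_cdf m hy)
    ((measure_cdf_preimage_Iic_le hc _).trans (ofReal_cdf m x).le)
    measurableSet_Iic.nullMeasurableSet (measure_ne_top _ _)).symm

theorem map_cdf_eq_restrict_Icc (hc : Continuous (cdf m)) :
    m.map (cdf m) = volume.restrict (Icc 0 1) := by
  have : IsProbabilityMeasure (m.map (cdf m)) := Measure.isProbabilityMeasure_map hc.aemeasurable
  refine Measure.ext_of_Iic _ _ fun t => ?_
  rw [Measure.map_apply hc.measurable measurableSet_Iic, Measure.restrict_apply measurableSet_Iic]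
  rcases le_or_gt 1 t with ht1 | ht1
  · have hpre : cdf m ⁻¹' Iic t = univ :=
      eq_univ_of_forall fun x => (cdf_le_one m x).trans ht1
    rw [hpre, inter_eq_right.2 (Icc_subset_Iic_self.trans (Iic_subset_Iic.2 ht1))]
    simp
  · rw [show Iic t ∩ Icc 0 1 = Icc 0 t by grind, Real.volume_Icc, sub_zero]
    refine le_antisymm (measure_cdf_preimage_Iic_le hc t) ?_
    rcases le_or_gt t 0 with ht0 | ht0
    · simp [ENNReal.ofReal_of_nonpos ht0]
    · obtain ⟨x, rfl⟩ := Ioo_subset_range_cdf hc ⟨ht0, ht1⟩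
      rw [ofReal_cdf]
      exact measure_mono fun y hy => monotone_cdf m hy

end ProbabilityTheory

instance {ι : Type*} {X : ι → Type*} [∀ i, MeasurableSpace (X i)] (μ : Measure (∀ i, X i))
    [IsProbabilityMeasure μ] (i : ι) : IsProbabilityMeasure (μ.map fun y => y i) :=
  Measure.isProbabilityMeasure_map (measurable_pi_apply i).aemeasurable

theorem pi_ae_eq_pi_of_ae_eq_map_eval {ι X : Type*} [Countable ι] [MeasurableSpace X]
    {μ : Measure (ι → X)} {s t : ι → Set X} (h : ∀ i, s i =ᵐ[μ.map fun y => y i] t i) :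
    univ.pi s =ᵐ[μ] univ.pi t := by
  have hmem : ∀ᵐ y ∂μ, ∀ i, (y i ∈ s i ↔ y i ∈ t i) := ae_all_iff.2 fun i =>
    ae_of_ae_map (measurable_pi_apply i).aemeasurable (eventuallyEq_set.1 (h i))
  refine eventuallyEq_set.2 ?_
  filter_upwards [hmem] with y hy
  simp only [mem_univ_pi, hy]

section UniformMargins

variable {ι : Type*} [Fintype ι] {ν : Measure (ι → ℝ)}

theorem measureReal_Iic_le_add_mul_dist [IsFiniteMeasure ν]
    (hν : ∀ i, ν.map (fun y => y i) = volume.restrict (Icc 0 1)) (u v : ι → ℝ) :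
    ν.real (Iic u) ≤ ν.real (Iic v) + Fintype.card ι * dist u v := by
  have hsub : Iic u ⊆ Iic v ∪ ⋃ i, (fun y => y i) ⁻¹' Ioc (v i) (u i) := by
    intro y hy
    by_cases hyv : y ≤ v
    · exact Or.inl hyv
    · obtain ⟨i, hi⟩ := not_forall.1 hyv
      exact Or.inr (mem_iUnion.2 ⟨i, not_le.1 hi, hy i⟩)
  have hmargin : ∀ i, ν.real ((fun y => y i) ⁻¹' Ioc (v i) (u i)) ≤ dist u v := by
    intro i
    rw [← map_measureReal_apply (measurable_pi_apply i) measurableSet_Ioc, hν,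
      measureReal_restrict_apply measurableSet_Ioc]
    calc volume.real (Ioc (v i) (u i) ∩ Icc 0 1) ≤ volume.real (Ioc (v i) (u i)) :=
          measureReal_mono inter_subset_left measure_Ioc_lt_top.ne
      _ = max (u i - v i) 0 := Real.volume_real_Ioc
      _ ≤ dist u v := max_le ((le_abs_self _).trans (dist_le_pi_dist u v i)) dist_nonneg
  calc ν.real (Iic u) ≤ ν.real (Iic v ∪ ⋃ i, (fun y => y i) ⁻¹' Ioc (v i) (u i)) :=
        measureReal_mono hsub
    _ ≤ ν.real (Iic v) + ∑ i, ν.real ((fun y => y i) ⁻¹' Ioc (v i) (u i)) :=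
        (measureReal_union_le _ _).trans (add_le_add le_rfl (measureReal_iUnion_fintype_le _))
    _ ≤ ν.real (Iic v) + Fintype.card ι * dist u v := by
        grw [Finset.sum_le_sum fun i _ => hmargin i]
        simp

theorem lipschitzWith_measureReal_Iic [IsFiniteMeasure ν]
    (hν : ∀ i, ν.map (fun y => y i) = volume.restrict (Icc 0 1)) :
    LipschitzWith (Fintype.card ι) fun u => ν.real (Iic u) :=
  LipschitzWith.of_le_add_mul _ (measureReal_Iic_le_add_mul_dist hν)

theorem measureReal_Iic_max_min (hν : ∀ i, ν.map (fun y => y i) = volume.restrict (Icc 0 1))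
    (u : ι → ℝ) : ν.real (Iic fun i => max 0 (min (u i) 1)) = ν.real (Iic u) := by
  -- `Ioc`, not `Icc`: for `yᵢ = 0 > uᵢ` the two lower orthants would disagree.
  have hIoc : ∀ᵐ y ∂ν, ∀ i, y i ∈ Ioc 0 1 := ae_all_iff.2 fun i => by
    refine ae_of_ae_map (measurable_pi_apply i).aemeasurable ?_
    rw [hν i, ← Measure.restrict_congr_set Ioc_ae_eq_Icc]
    exact ae_restrict_mem measurableSet_Ioc
  refine measureReal_congr (eventuallyEq_set.2 ?_)
  filter_upwards [hIoc] with y hy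
  refine forall_congr' fun i => ?_
  have := hy i
  simp only [le_max_iff, le_min_iff]
  grind

end UniformMargins

theorem IsCopula.eq_of_eqOn {d : ℕ} {C C' : (Fin d → ℝ) → ℝ} (hC : IsCopula d C)
    (hC' : IsCopula d C') (h : EqOn C C' (univ.pi fun _ => Ioo 0 1)) : C = C' := by
  obtain ⟨ν, _, hν, hCν⟩ := hC
  obtain ⟨ν', _, hν', hCν'⟩ := hC'
  obtain rfl : C = fun u => ν.real (Iic u) := funext hCν
  obtain rfl : C' = fun u => ν'.real (Iic u) := funext hCν'
  have hIcc : EqOn (fun u => ν.real (Iic u)) (fun u => ν'.real (Iic u))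
      (univ.pi fun _ => Icc 0 1) := by
    simpa [closure_pi_set] using
      h.closure (lipschitzWith_measureReal_Iic hν).continuous
        (lipschitzWith_measureReal_Iic hν').continuous
  funext u
  rw [← measureReal_Iic_max_min hν, ← measureReal_Iic_max_min hν' u]
  exact hIcc fun i _ => ⟨le_max_left _ _, max_le zero_le_one (min_le_right _ _)⟩

noncomputable def marginalCDF {ι : Type*} (μ : Measure (ι → ℝ)) (x : ι → ℝ) : ι → ℝ :=
  fun i => cdf (μ.map fun y => y i) (x i)

section MarginalCDF

variable {ι : Type*} {μ : Measure (ι → ℝ)}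

theorem measurable_marginalCDF : Measurable (marginalCDF μ) :=
  measurable_pi_lambda _ fun i => (monotone_cdf _).measurable.comp (measurable_pi_apply i)

theorem map_eval_map_marginalCDF [IsProbabilityMeasure μ] (i : ι)
    (hc : Continuous (cdf (μ.map fun y => y i))) :
    (μ.map (marginalCDF μ)).map (fun y => y i) = volume.restrict (Icc 0 1) := by
  rw [Measure.map_map (measurable_pi_apply i) measurable_marginalCDF,
    ← map_cdf_eq_restrict_Icc hc, Measure.map_map hc.measurable (measurable_pi_apply i)]
  rfl

theorem map_marginalCDF_Iic_marginalCDF [Countable ι] [IsProbabilityMeasure μ]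
    (hc : ∀ i, Continuous (cdf (μ.map fun y => y i))) (x : ι → ℝ) :
    μ.map (marginalCDF μ) (Iic (marginalCDF μ x)) = μ (Iic x) := by
  have hpre : marginalCDF μ ⁻¹' Iic (marginalCDF μ x) =
      univ.pi fun i => cdf (μ.map fun y => y i) ⁻¹' Iic (marginalCDF μ x i) := by
    ext; simp [marginalCDF, Pi.le_def]
  rw [Measure.map_apply measurable_marginalCDF measurableSet_Iic, hpre, ← pi_univ_Iic]
  exact measure_congr <|
    pi_ae_eq_pi_of_ae_eq_map_eval fun i => cdf_preimage_Iic_cdf_ae_eq (hc i) (x i)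

end MarginalCDF

/-- **Sklar's theorem (uniqueness for continuous margins).** For any `d`-variate CDF `F`
(the CDF of a probability measure `μ` on `ℝ^d`) with continuous univariate margins
`F₁, …, F_d`, there is a unique copula `C` with
`F (x₁, …, x_d) = C (F₁ x₁, …, F_d x_d)` for all `x ∈ ℝ^d`. -/
theorem sklar_unique (d : ℕ) (μ : Measure (Fin d → ℝ)) [IsProbabilityMeasure μ]
    (F : (Fin d → ℝ) → ℝ) (Fm : Fin d → ℝ → ℝ)
    (hF : ∀ x, F x = (μ {y | ∀ i, y i ≤ x i}).toReal)
    (hFm : ∀ i t, Fm i t = (μ.map (fun y => y i) (Set.Iic t)).toReal)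
    (hcont : ∀ i, Continuous (Fm i)) :
    ∃! C : (Fin d → ℝ) → ℝ, IsCopula d C ∧
      ∀ x : Fin d → ℝ, F x = C (fun i => Fm i (x i)) := by
  obtain rfl : Fm = fun i t => cdf (μ.map fun y => y i) t := by
    ext i t
    rw [hFm, cdf_eq_real, measureReal_def]
  set ν := μ.map (marginalCDF μ)
  have hC₀ : IsCopula d fun u => ν.real (Iic u) :=
    ⟨ν, Measure.isProbabilityMeasure_map measurable_marginalCDF.aemeasurable,
      fun i => map_eval_map_marginalCDF i (hcont i), fun _ => rfl⟩
  have hFC₀ : ∀ x, F x = ν.real (Iic (marginalCDF μ x)) := fun x => by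
    rw [hF, measureReal_def, map_marginalCDF_Iic_marginalCDF hcont]
    rfl
  refine ⟨_, ⟨hC₀, hFC₀⟩, fun C ⟨hC, hCF⟩ => hC.eq_of_eqOn hC₀ fun u hu => ?_⟩
  choose x hx using fun i => Ioo_subset_range_cdf (hcont i) (hu i (mem_univ i))
  obtain rfl : u = marginalCDF μ x := funext fun i => (hx i).symm
  exact (hCF x).symm.trans (hFC₀ x)
end

section
/- Let θ₀ < θ₁ be positive parameters of Clayton generators φ_{θ}(x) = (1+θx)^{-1/θ}. Then the nesting map ψ(x) = φ_{θ₀}^{-1}(φ_{θ₁}(x)) = ((1+θ₁x)^{θ₀/θ₁} - 1)/θ₀ has completely monotone derivative; hence Clayton copulas satisfy the sufficient nesting condition whenever the inner parameter exceeds the outer parameter. -/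
/-- Complete monotonicity on `(0,∞)`: infinitely differentiable with
`(-1)^k f^{(k)}(x) ≥ 0` for all `k ≥ 0` and `x > 0`. -/
def CompletelyMonotone (f : ℝ → ℝ) : Prop :=
  (∀ x : ℝ, 0 < x → ContDiffAt ℝ (⊤ : ℕ∞) f x) ∧
  ∀ (k : ℕ) (x : ℝ), 0 < x → 0 ≤ (-1 : ℝ) ^ k * iteratedDeriv k f x

section aux

variable {θ₁ : ℝ}

lemma hasDerivAt_base (hθ : 0 < θ₁) (p : ℝ) {x : ℝ} (hx : 0 < 1 + θ₁ * x) :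
    HasDerivAt (fun y : ℝ => (1 + θ₁ * y) ^ p) (θ₁ * p * (1 + θ₁ * x) ^ (p - 1)) x := by
  have h : HasDerivAt (fun y : ℝ => 1 + θ₁ * y) θ₁ x := by
    simpa using ((hasDerivAt_id x).const_mul θ₁).const_add 1
  exact h.rpow_const (Or.inl (ne_of_gt hx))

lemma iteratedDeriv_base (hθ : 0 < θ₁) (p : ℝ) (k : ℕ) :
    ∀ x : ℝ, 0 < x → iteratedDeriv k (fun y : ℝ => (1 + θ₁ * y) ^ p) x
      = θ₁ ^ k * (∏ j ∈ Finset.range k, (p - j)) * (1 + θ₁ * x) ^ (p - k) := by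
  induction k with
  | zero => intro x hx; simp
  | succ k ih =>
    intro x hx
    have hev : iteratedDeriv k (fun y : ℝ => (1 + θ₁ * y) ^ p)
        =ᶠ[nhds x] fun y => θ₁ ^ k * (∏ j ∈ Finset.range k, (p - j)) * (1 + θ₁ * y) ^ (p - k) :=
      (eventually_gt_nhds hx).mono fun y hy => ih y hy
    have hx' : 0 < 1 + θ₁ * x := by positivity
    have hd : HasDerivAt (fun y : ℝ => θ₁ ^ k * (∏ j ∈ Finset.range k, (p - j)) * (1 + θ₁ * y) ^ (p - k))
        (θ₁ ^ k * (∏ j ∈ Finset.range k, (p - j)) * (θ₁ * (p - k) * (1 + θ₁ * x) ^ (p - k - 1))) x :=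
      (hasDerivAt_base hθ (p - k) hx').const_mul _
    rw [iteratedDeriv_succ, hev.deriv_eq, hd.deriv]
    rw [Finset.prod_range_succ]
    have : (p - (k : ℝ)) - 1 = p - ((k : ℕ) + 1 : ℕ) := by push_cast; ring
    rw [← this]; ring

lemma contDiffAt_base (hθ : 0 < θ₁) (p : ℝ) {x : ℝ} (hx : 0 < x) :
    ContDiffAt ℝ (⊤ : ℕ∞) (fun y : ℝ => (1 + θ₁ * y) ^ p) x := by
  have hx' : (0:ℝ) < 1 + θ₁ * x := by positivity
  exact ContDiffAt.rpow_const_of_ne (by fun_prop) (ne_of_gt hx')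

end aux

/-- **Clayton copulas satisfy the sufficient nesting condition.** For `0 < θ₀ < θ₁`, the
nesting map `ψ(x) = φ_{θ₀}⁻¹(φ_{θ₁}(x)) = ((1 + θ₁ x)^{θ₀/θ₁} - 1)/θ₀` (where
`φ_θ(x) = (1+θx)^{-1/θ}` and `φ_θ⁻¹(u) = (u^{-θ} - 1)/θ`) has completely monotone
derivative. -/
theorem clayton_nesting (θ₀ θ₁ : ℝ) (h₀ : 0 < θ₀) (h₀₁ : θ₀ < θ₁) :
    CompletelyMonotone
      (deriv fun x : ℝ => ((1 + θ₁ * x) ^ (θ₀ / θ₁) - 1) / θ₀) ∧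
    ∀ x : ℝ, 0 ≤ x →
      ((1 + θ₁ * x) ^ (θ₀ / θ₁) - 1) / θ₀
        = (((1 + θ₁ * x) ^ (-(1 : ℝ) / θ₁)) ^ (-θ₀) - 1) / θ₀ := by
  have hθ₁ : 0 < θ₁ := h₀.trans h₀₁
  set α : ℝ := θ₀ / θ₁ with hα
  have hα0 : 0 < α := div_pos h₀ hθ₁
  have hα1 : α < 1 := (div_lt_one hθ₁).mpr h₀₁
  -- the derivative agrees with (1+θ₁x)^(α-1) near each x > 0
  have hder : ∀ x : ℝ, 0 < x →
      deriv (fun x : ℝ => ((1 + θ₁ * x) ^ α - 1) / θ₀) x = (1 + θ₁ * x) ^ (α - 1) := by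
    intro x hx
    have hx' : (0:ℝ) < 1 + θ₁ * x := by positivity
    have h1 : HasDerivAt (fun x : ℝ => ((1 + θ₁ * x) ^ α - 1) / θ₀)
        ((θ₁ * α * (1 + θ₁ * x) ^ (α - 1)) / θ₀) x :=
      ((hasDerivAt_base hθ₁ α hx').sub_const 1).div_const θ₀
    rw [h1.deriv, hα]
    field_simp
  have hev : ∀ x : ℝ, 0 < x →
      deriv (fun x : ℝ => ((1 + θ₁ * x) ^ α - 1) / θ₀)
        =ᶠ[nhds x] fun y => (1 + θ₁ * y) ^ (α - 1) := fun x hx =>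
    (eventually_gt_nhds hx).mono fun y hy => hder y hy
  refine ⟨⟨fun x hx => (contDiffAt_base hθ₁ (α - 1) hx).congr_of_eventuallyEq (hev x hx),
      fun k x hx => ?_⟩, fun x hx => ?_⟩
  · rw [(hev x hx).iteratedDeriv_eq k, iteratedDeriv_base hθ₁ (α - 1) k x hx]
    have hx' : (0:ℝ) < 1 + θ₁ * x := by positivity
    have key : (-1 : ℝ) ^ k * ∏ j ∈ Finset.range k, (α - 1 - (j : ℝ))
        = ∏ j ∈ Finset.range k, (1 + (j : ℝ) - α) := by
      rw [show (∏ j ∈ Finset.range k, (1 + (j : ℝ) - α))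
            = ∏ j ∈ Finset.range k, ((-1) * (α - 1 - (j : ℝ))) from
          Finset.prod_congr rfl fun j _ => by ring,
        Finset.prod_mul_distrib, Finset.prod_const, Finset.card_range]
    have hprod : 0 ≤ ∏ j ∈ Finset.range k, (1 + (j : ℝ) - α) :=
      Finset.prod_nonneg fun j _ => by
        have : (0:ℝ) ≤ j := Nat.cast_nonneg j
        linarith
    have : (-1 : ℝ) ^ k * (θ₁ ^ k * (∏ j ∈ Finset.range k, (α - 1 - (j : ℝ)))
          * (1 + θ₁ * x) ^ (α - 1 - k))
        = θ₁ ^ k * ((∏ j ∈ Finset.range k, (1 + (j : ℝ) - α)) * (1 + θ₁ * x) ^ (α - 1 - k)) := by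
      rw [← key]; ring
    rw [this]
    positivity
  · have hx' : (0:ℝ) < 1 + θ₁ * x := by positivity
    have h2 : (((1 + θ₁ * x) ^ (-(1:ℝ)/θ₁)) ^ (-θ₀)) = (1 + θ₁ * x) ^ α := by
      rw [hα, ← Real.rpow_mul hx'.le]
      congr 1
      ring
    rw [h2]
end
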